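/- For any smooth positive function ρ : ℝ^d → ℝ, the identity (1/2) ρ ∇(Δ√ρ / √ρ) = (1/4) div(ρ ∇²(log ρ)) holds pointwise. -/

import Mathlib

open MeasureTheory
open scoped ContDiff

noncomputable section

/-- Partial derivative in the `i`-th coordinate direction. -/
def pd {d : ℕ} (i : Fin d) (f : EuclideanSpace ℝ (Fin d) → ℝ)
    (x : EuclideanSpace ℝ (Fin d)) : ℝ :=
  fderiv ℝ f x (EuclideanSpace.single i 1)

/-- Laplacian. -/
def lap {d : ℕ} (f : EuclideanSpace ℝ (Fin d) → ℝ)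
    (x : EuclideanSpace ℝ (Fin d)) : ℝ :=
  ∑ i, pd i (fun y => pd i f y) x

namespace BohmAux

variable {d : ℕ} {f g : EuclideanSpace ℝ (Fin d) → ℝ} {x : EuclideanSpace ℝ (Fin d)} {i : Fin d}

lemma contDiff_pd (hf : ContDiff ℝ ∞ f) (i : Fin d) : ContDiff ℝ ∞ (pd i f) := by
  have h1 : ContDiff ℝ ∞ (fderiv ℝ f) := hf.fderiv_right (by simp)
  exact h1.clm_apply contDiff_const

lemma pd_add (hf : DifferentiableAt ℝ f x) (hg : DifferentiableAt ℝ g x) :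
    pd i (fun y => f y + g y) x = pd i f x + pd i g x := by
  unfold pd; rw [fderiv_fun_add hf hg]; simp

lemma pd_sub (hf : DifferentiableAt ℝ f x) (hg : DifferentiableAt ℝ g x) :
    pd i (fun y => f y - g y) x = pd i f x - pd i g x := by
  unfold pd; rw [fderiv_fun_sub hf hg]; simp

lemma pd_mul (hf : DifferentiableAt ℝ f x) (hg : DifferentiableAt ℝ g x) :
    pd i (fun y => f y * g y) x = f x * pd i g x + g x * pd i f x := by
  unfold pd; rw [fderiv_fun_mul hf hg]; simp

lemma pd_const_mul (c : ℝ) (hf : DifferentiableAt ℝ f x) :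
    pd i (fun y => c * f y) x = c * pd i f x := by
  unfold pd; rw [fderiv_const_mul hf c]; simp

lemma pd_sum {F : Fin d → EuclideanSpace ℝ (Fin d) → ℝ}
    (h : ∀ j, DifferentiableAt ℝ (F j) x) :
    pd i (fun y => ∑ j, F j y) x = ∑ j, pd i (F j) x := by
  unfold pd; rw [fderiv_fun_sum (fun j _ => h j)]; simp

lemma pd_comp {h : ℝ → ℝ} {h' : ℝ} (hh : HasDerivAt h h' (f x))
    (hf : DifferentiableAt ℝ f x) :
    pd i (fun y => h (f y)) x = h' * pd i f x := by
  have H := (hh.comp_hasFDerivAt x hf.hasFDerivAt).fderiv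
  unfold pd
  rw [show (fun y => h (f y)) = h ∘ f from rfl, H]
  simp

lemma diffAt_div (hf : DifferentiableAt ℝ f x) (hg : DifferentiableAt ℝ g x)
    (hx : g x ≠ 0) : DifferentiableAt ℝ (fun y => f y / g y) x := by
  simpa only [← div_eq_mul_inv] using hf.fun_mul (hg.fun_inv hx)

lemma pd_div (hf : DifferentiableAt ℝ f x) (hg : DifferentiableAt ℝ g x)
    (hx : g x ≠ 0) :
    pd i (fun y => f y / g y) x = (pd i f x * g x - f x * pd i g x) / g x ^ 2 := by
  have h1 : pd i (fun y => (g y)⁻¹) x = -(g x ^ 2)⁻¹ * pd i g x :=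
    pd_comp (hasDerivAt_inv hx) hg
  have h2 : (fun y => f y / g y) = fun y => f y * (g y)⁻¹ := by
    funext y; rw [div_eq_mul_inv]
  rw [h2, pd_mul hf (hg.fun_inv hx), h1]
  field_simp
  ring

lemma pd_sqrt (hf : DifferentiableAt ℝ f x) (hx : f x ≠ 0) :
    pd i (fun y => Real.sqrt (f y)) x = pd i f x / (2 * Real.sqrt (f x)) := by
  rw [pd_comp (Real.hasDerivAt_sqrt hx) hf]; ring

lemma pd_log (hf : DifferentiableAt ℝ f x) (hx : f x ≠ 0) :
    pd i (fun y => Real.log (f y)) x = pd i f x / f x := by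
  rw [pd_comp (Real.hasDerivAt_log hx) hf, inv_mul_eq_div]

lemma pd_comm (hf : ContDiff ℝ ∞ f) (i j : Fin d) (x : EuclideanSpace ℝ (Fin d)) :
    pd i (pd j f) x = pd j (pd i f) x := by
  have hsym : IsSymmSndFDerivAt ℝ f x :=
    (hf.contDiffAt).isSymmSndFDerivAt (by simp; exact WithTop.coe_le_coe.mpr le_top)
  have hdf : DifferentiableAt ℝ (fderiv ℝ f) x :=
    ((hf.fderiv_right (m := ∞) (le_of_eq rfl)).differentiable (by simp)) x
  have key : ∀ v : EuclideanSpace ℝ (Fin d),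
      fderiv ℝ (fun y => fderiv ℝ f y v) x = (fderiv ℝ (fderiv ℝ f) x).flip v := by
    intro v
    have h := fderiv_clm_apply hdf (differentiableAt_const v)
    simpa using h
  unfold pd
  rw [key, key]
  simp only [ContinuousLinearMap.flip_apply]
  exact hsym _ _

end BohmAux

open BohmAux

/-- Bohm potential identity: for smooth positive `ρ`,
`(1/2) ρ ∇(Δ√ρ/√ρ) = (1/4) div(ρ ∇²(log ρ))` pointwise (componentwise in `i`,
the Hessian `∇²(log ρ)` has entries `∂_i ∂_j log ρ` and the divergence of the
matrix field is taken row-wise). -/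
theorem bohm_identity_hessian_log_form {d : ℕ}
    (ρ : EuclideanSpace ℝ (Fin d) → ℝ)
    (hρ : ContDiff ℝ (⊤ : ℕ∞) ρ) (hpos : ∀ x, 0 < ρ x)
    (x : EuclideanSpace ℝ (Fin d)) (i : Fin d) :
    (1/2) * ρ x *
        pd i (fun y => lap (fun z => Real.sqrt (ρ z)) y / Real.sqrt (ρ y)) x
      = (1/4) * ∑ j, pd j (fun y =>
          ρ y * pd i (fun z => pd j (fun w => Real.log (ρ w)) z) y) x := by
  have hne : ∀ y, ρ y ≠ 0 := fun y => (hpos y).ne'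
  have hsne : ∀ y, Real.sqrt (ρ y) ≠ 0 := fun y => (Real.sqrt_pos.mpr (hpos y)).ne'
  have hrs : ContDiff ℝ ∞ ρ := hρ.of_le (by simp)
  have dρ : Differentiable ℝ ρ := hrs.differentiable (by simp)
  have c1 : ∀ j : Fin d, ContDiff ℝ ∞ (pd j ρ) := fun j => contDiff_pd hrs j
  have d1 : ∀ j : Fin d, Differentiable ℝ (pd j ρ) :=
    fun j => (c1 j).differentiable (by simp)
  have d2 : ∀ a b : Fin d, Differentiable ℝ (pd a (pd b ρ)) :=
    fun a b => (contDiff_pd (c1 b) a).differentiable (by simp)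
  -- first derivative of sqrt ∘ ρ
  have hA : ∀ (j : Fin d) (y), pd j (fun z => Real.sqrt (ρ z)) y
      = pd j ρ y / (2 * Real.sqrt (ρ y)) := fun j y => pd_sqrt (dρ y) (hne y)
  -- second derivative combined with division by sqrt
  have hB : ∀ (j : Fin d) (y),
      pd j (fun w => pd j ρ w / (2 * Real.sqrt (ρ w))) y / Real.sqrt (ρ y)
      = pd j (pd j ρ) y / (2 * ρ y) - pd j ρ y * pd j ρ y / (4 * (ρ y * ρ y)) := by
    intro j y
    have hgd : DifferentiableAt ℝ (fun w => 2 * Real.sqrt (ρ w)) y :=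
      ((dρ y).sqrt (hne y)).const_mul 2
    rw [pd_div ((d1 j) y) hgd (mul_ne_zero two_ne_zero (hsne y)),
        pd_const_mul 2 ((dρ y).sqrt (hne y)), pd_sqrt (dρ y) (hne y)]
    have hu : Real.sqrt (ρ y) ≠ 0 := hsne y
    have h2 : ρ y = Real.sqrt (ρ y) * Real.sqrt (ρ y) :=
      (Real.mul_self_sqrt (hpos y).le).symm
    set u := Real.sqrt (ρ y) with hudef
    rw [h2]
    field_simp
    ring
  -- first derivative of log ∘ ρ
  have hD : ∀ (j : Fin d) (y), pd j (fun w => Real.log (ρ w)) y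
      = pd j ρ y / ρ y := fun j y => pd_log (dρ y) (hne y)
  -- second derivative of log ∘ ρ
  have hE : ∀ (j : Fin d) (y), pd i (fun z => pd j ρ z / ρ z) y
      = (pd i (pd j ρ) y * ρ y - pd j ρ y * pd i ρ y) / ρ y ^ 2 := by
    intro j y
    rw [pd_div ((d1 j) y) (dρ y) (hne y)]
  have hF : ∀ (j : Fin d) (y),
      ρ y * ((pd i (pd j ρ) y * ρ y - pd j ρ y * pd i ρ y) / ρ y ^ 2)
      = pd i (pd j ρ) y - pd j ρ y * pd i ρ y / ρ y := by
    intro j y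
    field_simp [hne y]
  simp only [lap, hA, Finset.sum_div, hB, hD, hE, hF]
  have h2x : (2:ℝ) * ρ x ≠ 0 := mul_ne_zero two_ne_zero (hne x)
  have h4x : (4:ℝ) * (ρ x * ρ x) ≠ 0 :=
    mul_ne_zero (by norm_num) (mul_ne_zero (hne x) (hne x))
  have hq1 : ∀ j : Fin d, DifferentiableAt ℝ
      (fun y => pd j (pd j ρ) y / (2 * ρ y)) x := by
    intro j
    exact diffAt_div ((d2 j j) x) ((dρ x).const_mul 2) h2x
  have hq2 : ∀ j : Fin d, DifferentiableAt ℝ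
      (fun y => pd j ρ y * pd j ρ y / (4 * (ρ y * ρ y))) x := by
    intro j
    exact diffAt_div (((d1 j) x).mul ((d1 j) x)) (((dρ x).mul (dρ x)).const_mul 4) h4x
  have hq3 : ∀ j : Fin d, DifferentiableAt ℝ
      (fun y => pd j ρ y * pd i ρ y / ρ y) x := by
    intro j
    exact diffAt_div (((d1 j) x).mul ((d1 i) x)) (dρ x) (hne x)
  have hT : ∀ j : Fin d, DifferentiableAt ℝ
      (fun y => pd j (pd j ρ) y / (2 * ρ y)
        - pd j ρ y * pd j ρ y / (4 * (ρ y * ρ y))) x :=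
    fun j => (hq1 j).sub (hq2 j)
  rw [pd_sum hT, Finset.mul_sum, Finset.mul_sum]
  refine Finset.sum_congr rfl fun j _ => ?_
  -- expand left-hand term
  rw [pd_sub (hq1 j) (hq2 j),
    pd_div ((d2 j j) x) ((dρ x).const_mul 2) h2x,
    pd_const_mul 2 (dρ x),
    pd_div (((d1 j) x).fun_mul ((d1 j) x)) (((dρ x).fun_mul (dρ x)).const_mul 4) h4x,
    pd_mul ((d1 j) x) ((d1 j) x),
    pd_const_mul 4 ((dρ x).fun_mul (dρ x)),
    pd_mul (dρ x) (dρ x)]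
  -- expand right-hand term
  rw [pd_sub ((d2 i j) x) (hq3 j),
    pd_div (((d1 j) x).fun_mul ((d1 i) x)) (dρ x) (hne x),
    pd_mul ((d1 j) x) ((d1 i) x),
    pd_comm (c1 j) j i x, pd_comm hrs j i x]
  field_simp [hne x]
  ring

end
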